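/- For every φ ∈ Aut(F_n), the map F_n → H ⊗_ℤ H given by γ ↦ θ₂(γ) − (|φ| ⊗ |φ|)(θ₂(φ⁻¹(γ))) is a group homomorphism into the additive group H ⊗_ℤ H (i.e., it is additive on products of group elements); consequently it factors uniquely through the abelianization map a : F_n → H, yielding a well-defined additive map τ₁(φ) : H → H ⊗_ℤ H with τ₁(φ)(a(γ)) = θ₂(γ) − (|φ| ⊗ |φ|)(θ₂(φ⁻¹(γ))) for all γ ∈ F_n. -/

import Mathlib

noncomputable section
open scoped TensorProduct


/-- `H = Fin n →₀ ℤ`, the first integral homology of the free group. -/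
abbrev Hz (n : ℕ) : Type := Fin n →₀ ℤ

/-- The standard basis vector `X i`. -/
def Xz (n : ℕ) (i : Fin n) : Hz n := Finsupp.single i 1

/-- `H ⊗ℤ H`. -/
abbrev HHz (n : ℕ) : Type := Hz n ⊗[ℤ] Hz n

/-- The degree ≤ 2 truncation of the Magnus algebra: underlying set `H × (H ⊗ H)`,
with multiplication `(u,s)·(u',s') = (u+u', s+s'+u⊗u')`. -/
def Mn (n : ℕ) : Type := Hz n × HHz n

namespace Mn

variable {n : ℕ}

instance : Group (Mn n) where
  mul a b := (a.1 + b.1, a.2 + b.2 + a.1 ⊗ₜ[ℤ] b.1)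
  one := ((0 : Hz n), (0 : HHz n))
  inv a := (-a.1, -a.2 + a.1 ⊗ₜ[ℤ] a.1)
  mul_assoc a b c := by
    show (_, _) = (_, _)
    refine Prod.ext (add_assoc _ _ _) ?_
    show a.2 + b.2 + a.1 ⊗ₜ[ℤ] b.1 + c.2 + (a.1 + b.1) ⊗ₜ[ℤ] c.1
        = a.2 + (b.2 + c.2 + b.1 ⊗ₜ[ℤ] c.1) + a.1 ⊗ₜ[ℤ] (b.1 + c.1)
    rw [TensorProduct.add_tmul, TensorProduct.tmul_add]
    abel
  one_mul a := by
    show ((0 : Hz n) + a.1, (0 : HHz n) + a.2 + (0 : Hz n) ⊗ₜ[ℤ] a.1) = a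
    rw [TensorProduct.zero_tmul]
    simp
    rfl
  mul_one a := by
    show (a.1 + 0, a.2 + (0:HHz n) + a.1 ⊗ₜ[ℤ] (0 : Hz n)) = a
    rw [TensorProduct.tmul_zero]
    simp
    rfl
  inv_mul_cancel a := by
    show (-a.1 + a.1, (-a.2 + a.1 ⊗ₜ[ℤ] a.1) + a.2 + (-a.1) ⊗ₜ[ℤ] a.1) = ((0:Hz n), (0:HHz n))
    rw [TensorProduct.neg_tmul]
    refine Prod.ext (by simp) ?_
    show _ = (0 : HHz n)
    abel

end Mn

/-- The truncated standard Magnus expansion `Θ : F_n →* M_n`, `x_i ↦ (X_i, 0)`. -/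
def Theta (n : ℕ) : FreeGroup (Fin n) →* Mn n :=
  FreeGroup.lift fun i => ((Xz n i, 0) : Mn n)

/-- The abelianization map `a : F_n → H`, the first component of `Θ`. -/
def aMap (n : ℕ) (γ : FreeGroup (Fin n)) : Hz n := (Theta n γ).1

/-- `θ₂`, the second component of the truncated Magnus expansion. -/
def theta2 (n : ℕ) (γ : FreeGroup (Fin n)) : HHz n := (Theta n γ).2


/-- `γ ↦ θ₂(γ) − (|φ| ⊗ |φ|)(θ₂(φ⁻¹(γ)))`. -/
def tdiff (n : ℕ) (Φ : MulAut (FreeGroup (Fin n)) → (Hz n →+ Hz n))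
    (φ : MulAut (FreeGroup (Fin n))) (γ : FreeGroup (Fin n)) : HHz n :=
  theta2 n γ -
    (TensorProduct.map (Φ φ).toIntLinearMap (Φ φ).toIntLinearMap)
      (theta2 n (φ⁻¹ γ))

/-! Θ is a homomorphism into `M_n`, so `θ₂(γδ) = θ₂(γ) + θ₂(δ) + a(γ) ⊗ a(δ)`. Applying this on both
sides of `θ₂(γ) − (|φ| ⊗ |φ|)(θ₂(φ⁻¹γ))`, the quadratic correction terms agree because
`|φ|(a(φ⁻¹γ)) = a(γ)`, and they cancel: the difference is additive. An additive map out of the free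
group is determined by its values on the generators, hence factors through `a` via the
`ℤ`-linear map sending `X_i` to the value at `x_i`. -/

lemma aMap_mul (n : ℕ) (γ δ : FreeGroup (Fin n)) :
    aMap n (γ * δ) = aMap n γ + aMap n δ := by
  rw [aMap, map_mul]; rfl

lemma theta2_mul (n : ℕ) (γ δ : FreeGroup (Fin n)) :
    theta2 n (γ * δ) = theta2 n γ + theta2 n δ + aMap n γ ⊗ₜ[ℤ] aMap n δ := by
  rw [theta2, map_mul]; rfl

lemma aMap_of (n : ℕ) (i : Fin n) : aMap n (FreeGroup.of i) = Xz n i := by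
  have h : Theta n (FreeGroup.of i) = ((Xz n i, 0) : Mn n) := FreeGroup.lift_apply_of
  exact congrArg (Prod.fst (α := Hz n) (β := HHz n)) h

lemma tdiff_mul {n : ℕ} {Φ : MulAut (FreeGroup (Fin n)) → (Hz n →+ Hz n)}
    {φ : MulAut (FreeGroup (Fin n))} (hΦ : ∀ γ, Φ φ (aMap n γ) = aMap n (φ γ))
    (γ δ : FreeGroup (Fin n)) :
    tdiff n Φ φ (γ * δ) = tdiff n Φ φ γ + tdiff n Φ φ δ := by
  have hΦ_inv (x : FreeGroup (Fin n)) : Φ φ (aMap n (φ⁻¹ x)) = aMap n x := by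
    rw [hΦ, MulAut.apply_inv_self]
  simp only [tdiff, map_mul, theta2_mul, map_add, TensorProduct.map_tmul,
    AddMonoidHom.coe_toIntLinearMap, hΦ_inv]
  abel

lemma FreeGroup.eq_of_map_mul_eq_add {ι A : Type*} [AddGroup A] {f g : FreeGroup ι → A}
    (hf : ∀ x y, f (x * y) = f x + f y) (hg : ∀ x y, g (x * y) = g x + g y)
    (h : ∀ i, f (FreeGroup.of i) = g (FreeGroup.of i)) : f = g := by
  have := FreeGroup.ext_hom (f := MonoidHom.mk' (Multiplicative.ofAdd ∘ f) hf)
    (g := MonoidHom.mk' (Multiplicative.ofAdd ∘ g) hg) h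
  exact funext fun x => Multiplicative.ofAdd.injective (DFunLike.congr_fun this x)

lemma existsUnique_addMonoidHom_aMap_comp {n : ℕ} {A : Type*} [AddCommGroup A]
    (f : FreeGroup (Fin n) → A) (hf : ∀ γ δ, f (γ * δ) = f γ + f δ) :
    ∃! τ : Hz n →+ A, ∀ γ, τ (aMap n γ) = f γ := by
  let τ : Hz n →+ A := Finsupp.liftAddHom fun i => zmultiplesHom A (f (FreeGroup.of i))
  have hτ_of (i : Fin n) : τ (aMap n (FreeGroup.of i)) = f (FreeGroup.of i) := by
    simp [τ, aMap_of, Xz]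
  have hτ_aMap : (fun γ => τ (aMap n γ)) = f :=
    FreeGroup.eq_of_map_mul_eq_add (fun γ δ => by rw [aMap_mul, map_add]) hf hτ_of
  refine ⟨τ, congrFun hτ_aMap, fun τ' hτ' => ?_⟩
  refine Finsupp.addHom_ext' fun i => AddMonoidHom.ext_int ?_
  have h := (hτ' (FreeGroup.of i)).trans (hτ_of i).symm
  rwa [aMap_of] at h

theorem stmt12_general (n : ℕ)
    (Φ : MulAut (FreeGroup (Fin n)) → (Hz n →+ Hz n))
    (hΦ : ∀ (φ : MulAut (FreeGroup (Fin n))) (γ : FreeGroup (Fin n)),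
      Φ φ (aMap n γ) = aMap n (φ γ))
    (φ : MulAut (FreeGroup (Fin n))) :
    (∀ γ δ : FreeGroup (Fin n),
      tdiff n Φ φ (γ * δ) = tdiff n Φ φ γ + tdiff n Φ φ δ) ∧
    (∃! τ : Hz n →+ HHz n, ∀ γ : FreeGroup (Fin n), τ (aMap n γ) = tdiff n Φ φ γ) :=
  ⟨tdiff_mul (hΦ φ), existsUnique_addMonoidHom_aMap_comp _ (tdiff_mul (hΦ φ))⟩

theorem stmt12 (n : ℕ) (hn : 2 ≤ n)
    (Φ : MulAut (FreeGroup (Fin n)) → (Hz n →+ Hz n))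
    (hΦ : ∀ (φ : MulAut (FreeGroup (Fin n))) (γ : FreeGroup (Fin n)),
      Φ φ (aMap n γ) = aMap n (φ γ))
    (φ : MulAut (FreeGroup (Fin n))) :
    (∀ γ δ : FreeGroup (Fin n),
      tdiff n Φ φ (γ * δ) = tdiff n Φ φ γ + tdiff n Φ φ δ) ∧
    (∃! τ : Hz n →+ HHz n, ∀ γ : FreeGroup (Fin n), τ (aMap n γ) = tdiff n Φ φ γ) :=
  stmt12_general n Φ hΦ φ
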